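/- arXiv:1607.01666 — 5 statements merged into one kernel-verified Lean document; each statement's English description precedes it below -/
import Mathlib

section
/- Let 1 ≤ p < q < ∞, let t > 0 satisfy 2/(e^t + 1) > 1 − (1/p − 1/q), and fix a natural number k ≥ 1. Then for balls B = B(c_B, |c_B|^{−1}) with |c_B| ≥ 2^k, the ratio (∫_{C_k(B)} |e^{tL} 1_B|^q dγ)^{1/q} / γ(B)^{1/p} tends to infinity as |c_B| → ∞; in fact there are constants c₁ = c₁(k,n,t) > 0 and ε = ε(p,q,t) > 0 such that this ratio is at least c₁ · |c_B|^{−n(1 + 1/q + 1/p)} · exp(ε |c_B|²) for all such B. -/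
open MeasureTheory Real Set Metric
open scoped ENNReal RealInnerProductSpace

noncomputable def gaussianMeasure (n : ℕ) : Measure (EuclideanSpace ℝ (Fin n)) :=
  volume.withDensity (fun x => ENNReal.ofReal (Real.pi ^ (-(n : ℝ) / 2) * Real.exp (-‖x‖ ^ 2)))

noncomputable def mehlerKernel (n : ℕ) (t : ℝ) (x y : EuclideanSpace ℝ (Fin n)) : ℝ :=
  (1 - Real.exp (-2 * t)) ^ (-(n : ℝ) / 2) *
    Real.exp (-(Real.exp (-t)) * ‖x - y‖ ^ 2 / (1 - Real.exp (-2 * t))) *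
    Real.exp (2 * Real.exp (-t) * ⟪x, y⟫ / (1 + Real.exp (-t)))

noncomputable def ouSemigroup (n : ℕ) (t : ℝ) (u : EuclideanSpace ℝ (Fin n) → ℝ)
    (x : EuclideanSpace ℝ (Fin n)) : ℝ :=
  ∫ y, mehlerKernel n t x y * u y ∂(gaussianMeasure n)

noncomputable def setDist {α : Type*} [PseudoMetricSpace α] (E F : Set α) : ℝ :=
  sInf {d | ∃ x ∈ E, ∃ y ∈ F, d = dist x y}

noncomputable def annulus (n : ℕ) (c : EuclideanSpace ℝ (Fin n)) (r : ℝ) (k : ℕ) :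
    Set (EuclideanSpace ℝ (Fin n)) :=
  Metric.ball c (2 ^ (k + 1) * r) \ Metric.ball c (2 ^ k * r)

section AuxLemmas

variable {n : ℕ}

lemma expNegLt {t : ℝ} (ht : 0 < t) : Real.exp (-2 * t) < 1 := by
  rw [← Real.exp_zero]; exact Real.exp_lt_exp.mpr (by linarith)

lemma mehler_cont (t : ℝ) :
    Continuous fun p : EuclideanSpace ℝ (Fin n) × EuclideanSpace ℝ (Fin n) =>
      mehlerKernel n t p.1 p.2 := by
  unfold mehlerKernel
  refine (continuous_const.mul (Real.continuous_exp.comp ?_)).mul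
    (Real.continuous_exp.comp ?_)
  · exact ((continuous_const.mul ((continuous_fst.sub continuous_snd).norm.pow 2)).div_const _)
  · exact ((continuous_const.mul continuous_inner).div_const _)

lemma mehler_pos {t : ℝ} (ht : 0 < t) (x y : EuclideanSpace ℝ (Fin n)) :
    0 < mehlerKernel n t x y := by
  have hD : 0 < 1 - Real.exp (-2 * t) := by have := expNegLt ht; linarith
  unfold mehlerKernel
  exact mul_pos (mul_pos (Real.rpow_pos_of_pos hD _) (Real.exp_pos _)) (Real.exp_pos _)

lemma gaussianMeasure_apply {s : Set (EuclideanSpace ℝ (Fin n))} (hs : MeasurableSet s) :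
    gaussianMeasure n s
      = ∫⁻ x in s, ENNReal.ofReal (Real.pi ^ (-(n : ℝ) / 2) * Real.exp (-‖x‖ ^ 2)) :=
  withDensity_apply _ hs

lemma gauss_le {s : Set (EuclideanSpace ℝ (Fin n))} (hs : MeasurableSet s) {d : ℝ}
    (hd : ∀ x ∈ s, Real.pi ^ (-(n : ℝ) / 2) * Real.exp (-‖x‖ ^ 2) ≤ d) :
    gaussianMeasure n s ≤ ENNReal.ofReal d * volume s := by
  rw [gaussianMeasure_apply hs, ← setLIntegral_const]
  exact setLIntegral_mono measurable_const fun x hx => ENNReal.ofReal_le_ofReal (hd x hx)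

lemma gauss_ge {s : Set (EuclideanSpace ℝ (Fin n))} (hs : MeasurableSet s) {d : ℝ}
    (hd : ∀ x ∈ s, d ≤ Real.pi ^ (-(n : ℝ) / 2) * Real.exp (-‖x‖ ^ 2)) :
    ENNReal.ofReal d * volume s ≤ gaussianMeasure n s := by
  rw [gaussianMeasure_apply hs, ← setLIntegral_const]
  refine setLIntegral_mono (by fun_prop) fun x hx => ENNReal.ofReal_le_ofReal (hd x hx)

lemma gauss_ball_lt_top (c : EuclideanSpace ℝ (Fin n)) (R : ℝ) :
    gaussianMeasure n (Metric.ball c R) < ∞ := by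
  refine lt_of_le_of_lt (gauss_le measurableSet_ball (d := Real.pi ^ (-(n : ℝ) / 2))
    fun x _ => ?_) ?_
  · nth_rewrite 2 [← mul_one (Real.pi ^ (-(n : ℝ) / 2))]
    refine mul_le_mul_of_nonneg_left ?_ (Real.rpow_pos_of_pos Real.pi_pos _).le
    rw [← Real.exp_zero]; exact Real.exp_le_exp.mpr (neg_nonpos.mpr (by positivity))
  · exact ENNReal.mul_lt_top ENNReal.ofReal_lt_top measure_ball_lt_top

end AuxLemmas

set_option maxHeartbeats 1000000 in
/-- Quantitative blow-up of the ratio between the $L^q$ norm of $e^{tL}\mathbf{1}_B$ on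
the annulus $C_k(B)$ and $γ(B)^{1/p}$, for maximal admissible balls $B$: the ratio tends
to infinity as $|c_B| → ∞$, and in fact it is bounded below by
$c_1 |c_B|^{-n(1+1/q+1/p)} \exp(ε |c_B|^2)$ with $ε = 2/(e^t+1) - 1 + (1/p - 1/q) > 0$. -/
theorem ratio_blow_up (n : ℕ) (hn : 1 ≤ n) (p q t : ℝ)
    (hp : 1 ≤ p) (hpq : p < q) (ht : 0 < t)
    (hcond : 2 / (Real.exp t + 1) > 1 - (1 / p - 1 / q)) (k : ℕ) (hk : 1 ≤ k) :
    Filter.Tendsto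
      (fun cB : EuclideanSpace ℝ (Fin n) =>
        (∫ y in annulus n cB ‖cB‖⁻¹ k,
            |ouSemigroup n t ((Metric.ball cB ‖cB‖⁻¹).indicator 1) y| ^ q
              ∂(gaussianMeasure n)) ^ (1 / q) /
          ((gaussianMeasure n (Metric.ball cB ‖cB‖⁻¹)).toReal) ^ (1 / p))
      (Filter.comap (fun cB => ‖cB‖) Filter.atTop) Filter.atTop ∧
    ∃ c₁ : ℝ, 0 < c₁ ∧ ∀ cB : EuclideanSpace ℝ (Fin n), (2 : ℝ) ^ k ≤ ‖cB‖ →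
      (∫ y in annulus n cB ‖cB‖⁻¹ k,
          |ouSemigroup n t ((Metric.ball cB ‖cB‖⁻¹).indicator 1) y| ^ q
            ∂(gaussianMeasure n)) ^ (1 / q) /
        ((gaussianMeasure n (Metric.ball cB ‖cB‖⁻¹)).toReal) ^ (1 / p) ≥
      c₁ * ‖cB‖ ^ (-(n : ℝ) * (1 + 1 / q + 1 / p)) *
        Real.exp ((2 / (Real.exp t + 1) - 1 + (1 / p - 1 / q)) * ‖cB‖ ^ 2) := by
  haveI : Nonempty (Fin n) := ⟨⟨0, hn⟩⟩
  haveI : SFinite (gaussianMeasure n) := Measure.withDensity.instSFinite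
  have hq1 : 1 < q := lt_of_le_of_lt hp hpq
  have hq0 : 0 < q := by linarith
  have hp0 : 0 < p := by linarith
  have hD : 0 < 1 - Real.exp (-2 * t) := by have := expNegLt ht; linarith
  set D := 1 - Real.exp (-2 * t) with hDdef
  have het : 1 < Real.exp t := by
    rw [← Real.exp_zero]; exact Real.exp_lt_exp.mpr ht
  set a := 2 / (Real.exp t + 1) with hadef
  have ha0 : 0 < a := by rw [hadef]; positivity
  have ha1 : a < 1 := by rw [hadef, div_lt_one (by positivity)]; linarith
  set K : ℝ := 2 ^ (k + 1) with hKdef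
  have hK4 : 4 ≤ K := by
    rw [hKdef]
    calc (4 : ℝ) = 2 ^ 2 := by norm_num
    _ ≤ 2 ^ (k + 1) := pow_le_pow_right₀ one_le_two (by omega)
  set dπ : ℝ := Real.pi ^ (-(n : ℝ) / 2) with hdπ
  have hdπ0 : 0 < dπ := Real.rpow_pos_of_pos Real.pi_pos _
  set V : ℝ := (volume (Metric.ball (0 : EuclideanSpace ℝ (Fin n)) 1)).toReal with hVdef
  have hV0 : 0 < V := by
    rw [hVdef]
    exact ENNReal.toReal_pos (measure_ball_pos _ _ one_pos).ne' measure_ball_lt_top.ne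
  set m₀ : ℝ := D ^ (-(n : ℝ) / 2) * Real.exp (-(K + 1) ^ 2 / D) * Real.exp (-(2 * K + 1))
    with hm₀
  have hm₀0 : 0 < m₀ :=
    mul_pos (mul_pos (Real.rpow_pos_of_pos hD _) (Real.exp_pos _)) (Real.exp_pos _)
  set b₁ : ℝ := dπ * Real.exp (-3) * V with hb₁
  have hb₁0 : 0 < b₁ := by positivity
  set b₂ : ℝ := dπ * Real.exp 2 * V with hb₂
  have hb₂0 : 0 < b₂ := by positivity
  have hKn : ((2 : ℝ) ^ k) ^ n < K ^ n := by
    refine pow_lt_pow_left₀ ?_ (by positivity) (by omega)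
    rw [hKdef]
    exact pow_lt_pow_right₀ one_lt_two (by omega)
  set b₃ : ℝ := dπ * Real.exp (-(2 * K + 4)) * ((K ^ n - ((2 : ℝ) ^ k) ^ n) * V) with hb₃
  have hb₃0 : 0 < b₃ := by
    have := sub_pos.mpr hKn
    positivity
  set c₁ : ℝ := m₀ * b₁ * b₃ ^ (1 / q) / b₂ ^ (1 / p) with hc₁
  have hc₁0 : 0 < c₁ :=
    div_pos (mul_pos (mul_pos hm₀0 hb₁0) (Real.rpow_pos_of_pos hb₃0 _))
      (Real.rpow_pos_of_pos hb₂0 _)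
  clear_value D a K dπ V m₀ b₁ b₂ b₃ c₁
  have hmain : ∀ cB : EuclideanSpace ℝ (Fin n), (2 : ℝ) ^ k ≤ ‖cB‖ →
      (∫ y in annulus n cB ‖cB‖⁻¹ k,
          |ouSemigroup n t ((Metric.ball cB ‖cB‖⁻¹).indicator 1) y| ^ q
            ∂(gaussianMeasure n)) ^ (1 / q) /
        ((gaussianMeasure n (Metric.ball cB ‖cB‖⁻¹)).toReal) ^ (1 / p) ≥
      c₁ * ‖cB‖ ^ (-(n : ℝ) * (1 + 1 / q + 1 / p)) *
        Real.exp ((a - 1 + (1 / p - 1 / q)) * ‖cB‖ ^ 2) := by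
    intro cB hcB
    set s := ‖cB‖ with hsdef
    have hs2 : 2 ≤ s := by
      refine le_trans ?_ hcB
      calc (2 : ℝ) = 2 ^ 1 := (pow_one 2).symm
      _ ≤ 2 ^ k := pow_le_pow_right₀ one_le_two hk
    have hs0 : 0 < s := by linarith
    have hs1 : 1 ≤ s := by linarith
    set r := s⁻¹ with hrdef
    have hr0 : 0 < r := inv_pos.mpr hs0
    have hsr : s * r = 1 := mul_inv_cancel₀ hs0.ne'
    have hr1 : r ≤ 1 := by
      rw [hrdef]
      exact inv_le_one_of_one_le₀ hs1
    clear_value s r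
    have h2kr : (2 : ℝ) ^ k * r ≤ 1 := by
      calc (2 : ℝ) ^ k * r ≤ s * r := mul_le_mul_of_nonneg_right hcB hr0.le
      _ = 1 := hsr
    have hKr : K * r ≤ 2 := by
      calc K * r = 2 * ((2 : ℝ) ^ k * r) := by rw [hKdef]; ring
      _ ≤ 2 * 1 := by linarith
      _ = 2 := by ring
    have hKr0 : 0 ≤ K * r := by positivity
    set B := Metric.ball cB r with hBdef
    set A := annulus n cB r k with hAdef
    have hAeq : A = Metric.ball cB (K * r) \ Metric.ball cB ((2 : ℝ) ^ k * r) := by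
      rw [hAdef, hKdef]; rfl
    have hAmeas : MeasurableSet A := by
      rw [hAeq]; exact measurableSet_ball.diff measurableSet_ball
    have hAsub : A ⊆ Metric.ball cB (K * r) := by rw [hAeq]; exact Set.diff_subset
    -- volume facts
    have hvball : ∀ R : ℝ, 0 ≤ R → (volume (Metric.ball cB R)).toReal = R ^ n * V := by
      intro R hR
      rw [Measure.addHaar_ball _ _ hR, finrank_euclideanSpace_fin, ENNReal.toReal_mul,
        ENNReal.toReal_ofReal (pow_nonneg hR n), ← hVdef]
    have hvolB : (volume B).toReal = r ^ n * V := by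
      rw [hBdef]; exact hvball r hr0.le
    have hsubballs : Metric.ball cB ((2 : ℝ) ^ k * r) ⊆ Metric.ball cB (K * r) :=
      ball_subset_ball (by
        rw [hKdef, pow_succ]
        nlinarith only [mul_nonneg (pow_pos (two_pos (α := ℝ)) k).le hr0.le])
    have hvolA : (volume A).toReal = (K ^ n - ((2 : ℝ) ^ k) ^ n) * r ^ n * V := by
      have hvA1 : volume A = volume (Metric.ball cB (K * r))
          - volume (Metric.ball cB ((2 : ℝ) ^ k * r)) := by
        rw [hAeq]
        exact measure_diff hsubballs measurableSet_ball.nullMeasurableSet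
          measure_ball_lt_top.ne
      rw [hvA1, ENNReal.toReal_sub_of_le (measure_mono hsubballs) measure_ball_lt_top.ne,
        hvball _ hKr0, hvball _ (mul_nonneg (by positivity) hr0.le), mul_pow, mul_pow]
      ring
    -- gaussian measure bounds
    set X : ℝ := Real.exp (-s ^ 2) * r ^ n with hXdef
    have hX0 : 0 < X := by rw [hXdef]; exact mul_pos (Real.exp_pos _) (pow_pos hr0 n)
    clear_value X
    have hγBfin : gaussianMeasure n B < ∞ := gauss_ball_lt_top cB r
    set γB := (gaussianMeasure n B).toReal with hγBdef
    have hγAfin : gaussianMeasure n A < ∞ :=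
      lt_of_le_of_lt (measure_mono hAsub) (gauss_ball_lt_top cB (K * r))
    set γA := (gaussianMeasure n A).toReal with hγAdef
    have hγB_lo : b₁ * X ≤ γB := by
      have h1 : ENNReal.ofReal (dπ * (Real.exp (-3) * Real.exp (-s ^ 2))) * volume B
          ≤ gaussianMeasure n B := by
        refine gauss_ge measurableSet_ball fun x hx => ?_
        rw [← hdπ]
        refine mul_le_mul_of_nonneg_left ?_ hdπ0.le
        rw [← Real.exp_add]
        refine Real.exp_le_exp.mpr ?_
        have hxc : ‖x - cB‖ < r := mem_ball_iff_norm.mp hx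
        have hxn : ‖x‖ ≤ s + r := by
          have h := norm_sub_norm_le x cB
          rw [← hsdef] at h; linarith only [h, hxc]
        have hx2 : ‖x‖ ^ 2 ≤ (s + r) ^ 2 := by
          refine pow_le_pow_left₀ (norm_nonneg _) hxn 2
        nlinarith only [hsr, hr1, hr0.le, hx2]
      have h2 := ENNReal.toReal_mono hγBfin.ne h1
      rw [ENNReal.toReal_mul, ENNReal.toReal_ofReal (mul_nonneg hdπ0.le (by positivity)),
        hvolB] at h2
      calc b₁ * X = dπ * (Real.exp (-3) * Real.exp (-s ^ 2)) * (r ^ n * V) := by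
            rw [hb₁, hXdef]; ring
      _ ≤ γB := h2
    have hγB_hi : γB ≤ b₂ * X := by
      have h1 : gaussianMeasure n B
          ≤ ENNReal.ofReal (dπ * (Real.exp 2 * Real.exp (-s ^ 2))) * volume B := by
        refine gauss_le measurableSet_ball fun x hx => ?_
        rw [← hdπ]
        refine mul_le_mul_of_nonneg_left ?_ hdπ0.le
        rw [← Real.exp_add]
        refine Real.exp_le_exp.mpr ?_
        have hxc : ‖x - cB‖ < r := mem_ball_iff_norm.mp hx
        have hxn : s - r ≤ ‖x‖ := by
          have h := norm_sub_norm_le cB x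
          rw [← hsdef, norm_sub_rev] at h; linarith only [h, hxc]
        have hx2 : (s - r) ^ 2 ≤ ‖x‖ ^ 2 := by
          refine pow_le_pow_left₀ (by linarith only [hs2, hr1]) hxn 2
        nlinarith only [hsr, hx2, sq_nonneg r]
      have h2 := ENNReal.toReal_mono
        (ENNReal.mul_lt_top ENNReal.ofReal_lt_top measure_ball_lt_top).ne h1
      rw [ENNReal.toReal_mul, ENNReal.toReal_ofReal (mul_nonneg hdπ0.le (by positivity)),
        hvolB] at h2
      calc γB ≤ dπ * (Real.exp 2 * Real.exp (-s ^ 2)) * (r ^ n * V) := h2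
      _ = b₂ * X := by rw [hb₂, hXdef]; ring
    have hγA_lo : b₃ * X ≤ γA := by
      have h1 : ENNReal.ofReal (dπ * (Real.exp (-(2 * K + 4)) * Real.exp (-s ^ 2))) * volume A
          ≤ gaussianMeasure n A := by
        refine gauss_ge hAmeas fun x hx => ?_
        rw [← hdπ]
        refine mul_le_mul_of_nonneg_left ?_ hdπ0.le
        rw [← Real.exp_add]
        refine Real.exp_le_exp.mpr ?_
        have hxc : ‖x - cB‖ < K * r := mem_ball_iff_norm.mp (hAsub hx)
        have hxn : ‖x‖ ≤ s + K * r := by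
          have h := norm_sub_norm_le x cB
          rw [← hsdef] at h; linarith only [h, hxc]
        have hx2 : ‖x‖ ^ 2 ≤ (s + K * r) ^ 2 := by
          refine pow_le_pow_left₀ (norm_nonneg _) hxn 2
        have hKsr : s * (K * r) = K := by
          calc s * (K * r) = K * (s * r) := by ring
          _ = K := by rw [hsr, mul_one]
        nlinarith only [hx2, hKsr, hKr, hKr0]
      have h2 := ENNReal.toReal_mono hγAfin.ne h1
      rw [ENNReal.toReal_mul, ENNReal.toReal_ofReal (mul_nonneg hdπ0.le (by positivity)),
        hvolA] at h2
      calc b₃ * X = dπ * (Real.exp (-(2 * K + 4)) * Real.exp (-s ^ 2))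
            * ((K ^ n - ((2 : ℝ) ^ k) ^ n) * r ^ n * V) := by rw [hb₃, hXdef]; ring
      _ ≤ γA := h2
    have hγB0 : 0 < γB := lt_of_lt_of_le (mul_pos hb₁0 hX0) hγB_lo
    have hγA0nn : 0 ≤ γA := ENNReal.toReal_nonneg
    -- kernel form
    have haeq : 2 * Real.exp (-t) / (1 + Real.exp (-t)) = a := by
      rw [hadef, Real.exp_neg]
      have h := (Real.exp_pos t).ne'
      field_simp
    have hMform : ∀ y z : EuclideanSpace ℝ (Fin n), mehlerKernel n t y z
        = D ^ (-(n : ℝ) / 2) * Real.exp (-(Real.exp (-t)) * ‖y - z‖ ^ 2 / D)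
          * Real.exp (a * ⟪y, z⟫) := by
      intro y z
      unfold mehlerKernel
      rw [← hDdef, show 2 * Real.exp (-t) * ⟪y, z⟫ / (1 + Real.exp (-t)) = a * ⟪y, z⟫ by
        rw [← haeq]; ring]
    -- kernel lower bound on A × B
    have hMlo : ∀ y ∈ A, ∀ z ∈ B, m₀ * Real.exp (a * s ^ 2) ≤ mehlerKernel n t y z := by
      intro y hy z hz
      have hyc : ‖y - cB‖ ≤ K * r := (mem_ball_iff_norm.mp (hAsub hy)).le
      have hzc : ‖z - cB‖ ≤ r := (mem_ball_iff_norm.mp hz).le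
      have hyz : ‖y - z‖ ≤ K + 1 := by
        have h := norm_sub_le (y - cB) (z - cB)
        have heq : (y - cB) - (z - cB) = y - z := by abel
        rw [heq] at h
        linarith only [h, hyc, hzc, hr1, hKr, hK4]
      have het1 : Real.exp (-t) ≤ 1 := by
        rw [← Real.exp_zero]; exact Real.exp_le_exp.mpr (by linarith only [ht])
      have hinner : s ^ 2 - (2 * K + 1) ≤ ⟪y, z⟫ := by
        have hexp : ⟪y, z⟫ = ⟪cB, cB⟫ + ⟪cB, z - cB⟫ + ⟪y - cB, z⟫ := by
          rw [inner_sub_right, inner_sub_left]; ring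
        have h1 : ⟪cB, cB⟫ = s ^ 2 := by rw [hsdef]; exact real_inner_self_eq_norm_sq cB
        have h2 : |⟪cB, z - cB⟫| ≤ ‖cB‖ * ‖z - cB‖ := abs_real_inner_le_norm _ _
        have h3 : |⟪y - cB, z⟫| ≤ ‖y - cB‖ * ‖z‖ := abs_real_inner_le_norm _ _
        have hz2 : ‖z‖ ≤ s + r := by
          have h := norm_sub_norm_le z cB
          rw [← hsdef] at h; linarith only [h, hzc]
        have e2 : -(1 : ℝ) ≤ ⟪cB, z - cB⟫ := by
          have hm : ‖cB‖ * ‖z - cB‖ ≤ s * r := by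
            rw [hsdef]; exact mul_le_mul_of_nonneg_left hzc (norm_nonneg _)
          rw [hsr] at hm
          have hna := neg_abs_le ⟪cB, z - cB⟫
          linarith only [hna, h2, hm]
        have e3 : -(2 * K) ≤ ⟪y - cB, z⟫ := by
          have hm : ‖y - cB‖ * ‖z‖ ≤ (K * r) * (s + r) :=
            mul_le_mul hyc hz2 (norm_nonneg _) hKr0
          have hkr2 : (K * r) * (s + r) = K * (s * r) + (K * r) * r := by ring
          have hkr3 : (K * r) * (s + r) ≤ K + 2 := by
            rw [hkr2, hsr, mul_one]
            nlinarith only [hKr, hr1, hr0.le, hKr0]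
          have hna := neg_abs_le ⟪y - cB, z⟫
          linarith only [hna, h3, hm, hkr3, hK4]
        rw [hexp, h1]; linarith only [e2, e3]
      rw [hMform]
      have hDe : (0 : ℝ) < D ^ (-(n : ℝ) / 2) := Real.rpow_pos_of_pos hD _
      have f1 : Real.exp (-(K + 1) ^ 2 / D) ≤ Real.exp (-(Real.exp (-t)) * ‖y - z‖ ^ 2 / D) := by
        refine Real.exp_le_exp.mpr ((div_le_div_iff_of_pos_right hD).mpr ?_)
        have hyz2 : ‖y - z‖ ^ 2 ≤ (K + 1) ^ 2 := pow_le_pow_left₀ (norm_nonneg _) hyz 2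
        nlinarith only [hyz2, het1, (Real.exp_pos (-t)).le, sq_nonneg ‖y - z‖]
      have f2 : Real.exp (-(2 * K + 1)) * Real.exp (a * s ^ 2) ≤ Real.exp (a * ⟪y, z⟫) := by
        rw [← Real.exp_add]
        refine Real.exp_le_exp.mpr ?_
        have hmul := mul_le_mul_of_nonneg_left hinner ha0.le
        nlinarith only [hmul, ha1.le, ha0.le, hK4]
      calc m₀ * Real.exp (a * s ^ 2)
          = D ^ (-(n : ℝ) / 2) * (Real.exp (-(K + 1) ^ 2 / D)
            * (Real.exp (-(2 * K + 1)) * Real.exp (a * s ^ 2))) := by rw [hm₀]; ring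
      _ ≤ D ^ (-(n : ℝ) / 2) * (Real.exp (-(Real.exp (-t)) * ‖y - z‖ ^ 2 / D)
            * Real.exp (a * ⟪y, z⟫)) := by
          refine mul_le_mul_of_nonneg_left ?_ hDe.le
          exact mul_le_mul f1 f2 (by positivity) (Real.exp_pos _).le
      _ = D ^ (-(n : ℝ) / 2) * Real.exp (-(Real.exp (-t)) * ‖y - z‖ ^ 2 / D)
            * Real.exp (a * ⟪y, z⟫) := by ring
    -- kernel upper bounds
    have hMhi2 : ∀ (y : EuclideanSpace ℝ (Fin n)), ∀ z ∈ B, mehlerKernel n t y z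
        ≤ D ^ (-(n : ℝ) / 2) * Real.exp (a * (‖y‖ * (s + 1))) := by
      intro y z hz
      rw [hMform]
      have hDe : (0 : ℝ) < D ^ (-(n : ℝ) / 2) := Real.rpow_pos_of_pos hD _
      have hz2 : ‖z‖ ≤ s + 1 := by
        have hzc : ‖z - cB‖ ≤ r := (mem_ball_iff_norm.mp hz).le
        have h := norm_sub_norm_le z cB
        rw [← hsdef] at h; linarith only [h, hzc, hr1]
      have g1 : Real.exp (-(Real.exp (-t)) * ‖y - z‖ ^ 2 / D) ≤ 1 := by
        rw [← Real.exp_zero]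
        refine Real.exp_le_exp.mpr (div_nonpos_of_nonpos_of_nonneg ?_ hD.le)
        nlinarith only [mul_nonneg (Real.exp_pos (-t)).le (sq_nonneg ‖y - z‖)]
      have g2 : Real.exp (a * ⟪y, z⟫) ≤ Real.exp (a * (‖y‖ * (s + 1))) := by
        refine Real.exp_le_exp.mpr (mul_le_mul_of_nonneg_left ?_ ha0.le)
        refine le_trans (real_inner_le_norm y z) ?_
        exact mul_le_mul_of_nonneg_left hz2 (norm_nonneg _)
      calc D ^ (-(n : ℝ) / 2) * Real.exp (-(Real.exp (-t)) * ‖y - z‖ ^ 2 / D)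
            * Real.exp (a * ⟪y, z⟫)
          ≤ D ^ (-(n : ℝ) / 2) * 1 * Real.exp (a * (‖y‖ * (s + 1))) := by
            refine mul_le_mul (mul_le_mul_of_nonneg_left g1 hDe.le) g2
              (Real.exp_pos _).le (by nlinarith only [hDe])
      _ = D ^ (-(n : ℝ) / 2) * Real.exp (a * (‖y‖ * (s + 1))) := by ring
    set Cu : ℝ := D ^ (-(n : ℝ) / 2) * Real.exp (a * ((s + 2) * (s + 1))) with hCudef
    have hMhi : ∀ y ∈ A, ∀ z ∈ B, mehlerKernel n t y z ≤ Cu := by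
      intro y hy z hz
      refine le_trans (hMhi2 y z hz) ?_
      rw [hCudef]
      refine mul_le_mul_of_nonneg_left (Real.exp_le_exp.mpr
        (mul_le_mul_of_nonneg_left ?_ ha0.le)) (Real.rpow_pos_of_pos hD _).le
      have hyc : ‖y - cB‖ ≤ K * r := (mem_ball_iff_norm.mp (hAsub hy)).le
      have h := norm_sub_norm_le y cB
      rw [← hsdef] at h
      have hy2 : ‖y‖ ≤ s + 2 := by linarith only [h, hyc, hKr]
      nlinarith only [hy2, hs0]
    -- representation of the semigroup
    have hTrep : ∀ y, ouSemigroup n t (B.indicator 1) y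
        = ∫ z in B, mehlerKernel n t y z ∂(gaussianMeasure n) := by
      intro y
      unfold ouSemigroup
      rw [← integral_indicator measurableSet_ball]
      congr 1
      funext z
      by_cases hz : z ∈ B
      · simp [Set.indicator_of_mem hz, Set.indicator_of_mem (show z ∈ Metric.ball cB r from hz)]
      · simp [Set.indicator_of_notMem hz, Set.indicator_of_notMem (show z ∉ Metric.ball cB r from hz)]
    have hInty : ∀ y, IntegrableOn (fun z => mehlerKernel n t y z) B (gaussianMeasure n) := by
      intro y
      refine Measure.integrableOn_of_bounded hγBfin.ne
        (((mehler_cont t).comp (Continuous.prodMk_right y)).aestronglyMeasurable)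
        (M := D ^ (-(n : ℝ) / 2) * Real.exp (a * (‖y‖ * (s + 1)))) ?_
      refine (ae_restrict_iff' measurableSet_ball).mpr (Filter.Eventually.of_forall
        fun z hz => ?_)
      rw [Real.norm_eq_abs, abs_of_pos (mehler_pos ht y z)]
      exact hMhi2 y z hz
    have hTlo : ∀ y ∈ A, m₀ * Real.exp (a * s ^ 2) * γB
        ≤ ouSemigroup n t (B.indicator 1) y := by
      intro y hy
      rw [hTrep y]
      exact setIntegral_ge_of_const_le_real measurableSet_ball hγBfin.ne
        (fun z hz => hMlo y hy z hz) (hInty y)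
    have hThi : ∀ y ∈ A, |ouSemigroup n t (B.indicator 1) y| ≤ Cu * γB := by
      intro y hy
      rw [hTrep y, ← Real.norm_eq_abs]
      refine norm_setIntegral_le_of_norm_le_const hγBfin
        fun z hz => ?_
      rw [Real.norm_eq_abs, abs_of_pos (mehler_pos ht y z)]
      exact hMhi y hy z hz
    -- measurability of the semigroup
    have hSMT : StronglyMeasurable (ouSemigroup n t (B.indicator 1)) := by
      have hF : StronglyMeasurable fun pz : EuclideanSpace ℝ (Fin n) × EuclideanSpace ℝ (Fin n)
          => mehlerKernel n t pz.1 pz.2 * (B.indicator 1) pz.2 :=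
        ((mehler_cont t).stronglyMeasurable).mul
          ((stronglyMeasurable_one.indicator measurableSet_ball).comp_measurable measurable_snd)
      exact hF.integral_prod_right'
    have hTq_meas : AEStronglyMeasurable
        (fun y => |ouSemigroup n t (B.indicator 1) y| ^ q) (gaussianMeasure n) := by
      have hcont : Continuous fun x : ℝ => |x| ^ q :=
        (Real.continuous_rpow_const hq0.le).comp continuous_abs
      exact (hcont.measurable.comp hSMT.measurable).aestronglyMeasurable
    have hIq : IntegrableOn (fun y => |ouSemigroup n t (B.indicator 1) y| ^ q) A
        (gaussianMeasure n) := by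
      refine Measure.integrableOn_of_bounded hγAfin.ne hTq_meas (M := (Cu * γB) ^ q) ?_
      refine (ae_restrict_iff' hAmeas).mpr (Filter.Eventually.of_forall fun y hy => ?_)
      rw [Real.norm_eq_abs, abs_of_nonneg (Real.rpow_nonneg (abs_nonneg _) q)]
      exact Real.rpow_le_rpow (abs_nonneg _) (hThi y hy) hq0.le
    have hIlo : (m₀ * Real.exp (a * s ^ 2) * γB) ^ q * γA
        ≤ ∫ y in A, |ouSemigroup n t (B.indicator 1) y| ^ q ∂(gaussianMeasure n) := by
      refine setIntegral_ge_of_const_le_real hAmeas hγAfin.ne (fun y hy => ?_) hIq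
      exact Real.rpow_le_rpow
        (mul_nonneg (mul_nonneg hm₀0.le (Real.exp_pos _).le) hγB0.le)
        (le_trans (hTlo y hy) (le_abs_self _)) hq0.le
    have hNum : m₀ * Real.exp (a * s ^ 2) * γB * γA ^ (1 / q)
        ≤ (∫ y in A, |ouSemigroup n t (B.indicator 1) y| ^ q ∂(gaussianMeasure n)) ^ (1 / q) := by
      have hmB : (0:ℝ) ≤ m₀ * Real.exp (a * s ^ 2) * γB :=
        mul_nonneg (mul_nonneg hm₀0.le (Real.exp_pos _).le) hγB0.le
      have h := Real.rpow_le_rpow (mul_nonneg (Real.rpow_nonneg hmB q) hγA0nn) hIlo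
        (by positivity : (0:ℝ) ≤ 1 / q)
      rwa [Real.mul_rpow (Real.rpow_nonneg hmB q) hγA0nn, ← Real.rpow_mul hmB,
        mul_one_div_cancel hq0.ne', Real.rpow_one] at h
    have hDen_pos : 0 < γB ^ (1 / p) := Real.rpow_pos_of_pos hγB0 _
    have hDen_le : γB ^ (1 / p) ≤ (b₂ * X) ^ (1 / p) :=
      Real.rpow_le_rpow ENNReal.toReal_nonneg hγB_hi (by positivity)
    rw [ge_iff_le]
    -- final algebra
    have hXα : X * X ^ (1 / q) / X ^ (1 / p) = X ^ (1 + 1 / q - 1 / p) := by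
      rw [Real.rpow_sub hX0, Real.rpow_add hX0, Real.rpow_one]
    have hb2ne : (b₂ : ℝ) ^ (1 / p) ≠ 0 := (Real.rpow_pos_of_pos hb₂0 _).ne'
    have hXpne : (X : ℝ) ^ (1 / p) ≠ 0 := (Real.rpow_pos_of_pos hX0 _).ne'
    have hRHSeq : m₀ * Real.exp (a * s ^ 2) * (b₁ * X) * (b₃ * X) ^ (1 / q)
          / ((b₂ * X) ^ (1 / p))
        = c₁ * (Real.exp (a * s ^ 2) * X ^ (1 + 1 / q - 1 / p)) := by
      rw [Real.mul_rpow hb₃0.le hX0.le, Real.mul_rpow hb₂0.le hX0.le, ← hXα, hc₁]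
      field_simp
    have hXαval : X ^ (1 + 1 / q - 1 / p)
        = Real.exp (-s ^ 2 * (1 + 1 / q - 1 / p)) * s ^ (-((n : ℝ) * (1 + 1 / q - 1 / p))) := by
      rw [hXdef, Real.mul_rpow (Real.exp_pos _).le (pow_nonneg hr0.le n), ← Real.exp_mul,
        ← Real.rpow_natCast r n, ← Real.rpow_mul hr0.le, hrdef,
        Real.inv_rpow hs0.le, ← Real.rpow_neg hs0.le]
    have hfinal : c₁ * s ^ (-(n : ℝ) * (1 + 1 / q + 1 / p))
          * Real.exp ((a - 1 + (1 / p - 1 / q)) * s ^ 2)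
        ≤ m₀ * Real.exp (a * s ^ 2) * (b₁ * X) * (b₃ * X) ^ (1 / q)
          / ((b₂ * X) ^ (1 / p)) := by
      rw [hRHSeq, hXαval]
      have hexps : Real.exp (a * s ^ 2) * Real.exp (-s ^ 2 * (1 + 1 / q - 1 / p))
          = Real.exp ((a - 1 + (1 / p - 1 / q)) * s ^ 2) := by
        rw [← Real.exp_add]; congr 1; ring
      have hspow : s ^ (-(n : ℝ) * (1 + 1 / q + 1 / p))
          ≤ s ^ (-((n : ℝ) * (1 + 1 / q - 1 / p))) := by
        refine Real.rpow_le_rpow_of_exponent_le hs1 ?_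
        have h1p : 0 < 1 / p := by positivity
        have hn0 : (0 : ℝ) ≤ n := Nat.cast_nonneg n
        nlinarith only [mul_nonneg hn0 h1p.le]
      calc c₁ * s ^ (-(n : ℝ) * (1 + 1 / q + 1 / p))
            * Real.exp ((a - 1 + (1 / p - 1 / q)) * s ^ 2)
          ≤ c₁ * s ^ (-((n : ℝ) * (1 + 1 / q - 1 / p)))
            * Real.exp ((a - 1 + (1 / p - 1 / q)) * s ^ 2) := by
            refine mul_le_mul_of_nonneg_right (mul_le_mul_of_nonneg_left hspow hc₁0.le)
              (Real.exp_pos _).le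
      _ = c₁ * (Real.exp (a * s ^ 2) * (Real.exp (-s ^ 2 * (1 + 1 / q - 1 / p))
            * s ^ (-((n : ℝ) * (1 + 1 / q - 1 / p))))) := by rw [← hexps]; ring
    refine le_trans hfinal
      (le_trans (b := m₀ * Real.exp (a * s ^ 2) * γB * γA ^ (1 / q) / γB ^ (1 / p)) ?_
        ((div_le_div_iff_of_pos_right hDen_pos).mpr hNum))
    have hme : (0:ℝ) ≤ m₀ * Real.exp (a * s ^ 2) :=
      mul_nonneg hm₀0.le (Real.exp_pos _).le
    refine div_le_div₀
      (mul_nonneg (mul_nonneg hme hγB0.le) (Real.rpow_nonneg hγA0nn _))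
      ?_ hDen_pos hDen_le
    refine mul_le_mul (mul_le_mul_of_nonneg_left hγB_lo hme) ?_
      (Real.rpow_nonneg (mul_nonneg hb₃0.le hX0.le) _)
      (mul_nonneg hme hγB0.le)
    exact Real.rpow_le_rpow (mul_nonneg hb₃0.le hX0.le) hγA_lo (by positivity)
  constructor
  · have hε : 0 < a - 1 + (1 / p - 1 / q) := by linarith only [hcond]
    set ε := a - 1 + (1 / p - 1 / q) with hεdef
    set β := -(n : ℝ) * (1 + 1 / q + 1 / p) with hβdef
    have hβ0 : β ≤ 0 := by
      rw [hβdef]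
      have h1 : (0:ℝ) ≤ (n : ℝ) := Nat.cast_nonneg n
      have h2 : (0:ℝ) ≤ 1 + 1 / q + 1 / p := by positivity
      nlinarith only [h1, h2]
    clear_value ε β
    have h2 : Filter.Tendsto (fun x : ℝ => x * (ε * x + β)) Filter.atTop Filter.atTop :=
      Filter.Tendsto.atTop_mul_atTop₀ Filter.tendsto_id
        (Filter.tendsto_atTop_add_const_right _ β
          (Filter.Tendsto.const_mul_atTop hε Filter.tendsto_id))
    have h3 : Filter.Tendsto (fun x : ℝ => ε * x ^ 2 + Real.log x * β)
        Filter.atTop Filter.atTop := by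
      refine Filter.tendsto_atTop_mono' Filter.atTop ?_ h2
      filter_upwards [Filter.eventually_ge_atTop 1] with x hx
      have hlog : Real.log x ≤ x := by
        have h := Real.log_le_sub_one_of_pos (by linarith only [hx] : (0:ℝ) < x)
        linarith only [h]
      have hβx : x * β ≤ Real.log x * β := mul_le_mul_of_nonpos_right hlog hβ0
      calc x * (ε * x + β) = ε * x ^ 2 + x * β := by ring
      _ ≤ ε * x ^ 2 + Real.log x * β := by linarith only [hβx]
    have hg : Filter.Tendsto (fun x : ℝ => c₁ * Real.exp (ε * x ^ 2 + Real.log x * β))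
        Filter.atTop Filter.atTop :=
      Filter.Tendsto.const_mul_atTop hc₁0 (Real.tendsto_exp_atTop.comp h3)
    have hg2 : Filter.Tendsto (fun x : ℝ => c₁ * x ^ β * Real.exp (ε * x ^ 2))
        Filter.atTop Filter.atTop := by
      refine hg.congr' ?_
      filter_upwards [Filter.eventually_gt_atTop 0] with x hx
      rw [Real.exp_add, Real.rpow_def_of_pos hx]; ring
    refine Filter.tendsto_atTop_mono' _ ?_ (hg2.comp Filter.tendsto_comap)
    filter_upwards [Filter.preimage_mem_comap (Filter.Ici_mem_atTop ((2:ℝ) ^ k))] with cB hcB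
    exact hmain cB hcB
  · exact ⟨c₁, hc₁0, hmain⟩
end

section
/- Let k ≥ 1 be a natural number, let t > 0, and let B = B(c_B, |c_B|^{−1}) be a maximal admissible ball with |c_B| ≥ 2^k. Then there is a constant c₀ = c₀(k, n, t) > 0, independent of c_B, such that for every y ∈ C_k(B), e^{tL} 1_B(y) ≥ c₀ · |c_B|^{−n} · exp( |c_B|² ( 2/(e^t + 1) − 1 ) ). -/
open MeasureTheory Real Set Metric
open scoped ENNReal RealInnerProductSpace

set_option maxHeartbeats 2000000 in
/-- Pointwise lower bound on $e^{tL}\mathbf 1_B$ on the annulus $C_k(B)$, for a maximal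
admissible ball $B = B(c_B, |c_B|^{-1})$ with $|c_B| ≥ 2^k$. -/
theorem pointwise_lower_bound (n : ℕ) (hn : 1 ≤ n) (k : ℕ) (hk : 1 ≤ k) (t : ℝ)
    (ht : 0 < t) :
    ∃ c₀ : ℝ, 0 < c₀ ∧ ∀ cB : EuclideanSpace ℝ (Fin n), (2 : ℝ) ^ k ≤ ‖cB‖ →
      ∀ y ∈ annulus n cB ‖cB‖⁻¹ k,
        ouSemigroup n t ((Metric.ball cB ‖cB‖⁻¹).indicator 1) y ≥
          c₀ * ‖cB‖ ^ (-(n : ℝ)) *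
            Real.exp (‖cB‖ ^ 2 * (2 / (Real.exp t + 1) - 1)) := by
  have ha : (0:ℝ) < Real.exp (-t) := Real.exp_pos _
  have ha1 : Real.exp (-t) < 1 := Real.exp_lt_one_iff.2 (by linarith)
  have hb : (0:ℝ) < 1 - Real.exp (-2 * t) := by
    have : Real.exp (-2 * t) < 1 := Real.exp_lt_one_iff.2 (by nlinarith)
    linarith
  have hA : (0:ℝ) < (1 - Real.exp (-2 * t)) ^ (-(n : ℝ) / 2) := Real.rpow_pos_of_pos hb _
  have hπ : (0:ℝ) < Real.pi ^ (-(n : ℝ) / 2) := Real.rpow_pos_of_pos Real.pi_pos _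
  -- β = 2/(e^t+1) = 2 e^{-t}/(1+e^{-t})
  have hβeq : 2 / (Real.exp t + 1) = 2 * Real.exp (-t) / (1 + Real.exp (-t)) := by
    rw [Real.exp_neg]
    have h1 : (0:ℝ) < Real.exp t := Real.exp_pos t
    field_simp
  have hβpos : (0:ℝ) < 2 / (Real.exp t + 1) := by positivity
  have hβle : 2 / (Real.exp t + 1) ≤ 1 := by
    rw [div_le_one (by positivity)]
    have := Real.add_one_le_exp t
    linarith
  set V : ℝ := (volume (Metric.ball (0 : EuclideanSpace ℝ (Fin n)) 1)).toReal with hV_def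
  have hV : 0 < V := by
    have h1 : (0:ℝ≥0∞) < volume (Metric.ball (0 : EuclideanSpace ℝ (Fin n)) 1) :=
      measure_ball_pos volume 0 one_pos
    exact ENNReal.toReal_pos h1.ne' measure_ball_lt_top.ne
  set D : ℝ := 2 ^ (k + 1) + 2 with hD_def
  refine ⟨(1 - Real.exp (-2 * t)) ^ (-(n : ℝ) / 2) *
      Real.exp (-(9 * Real.exp (-t)) / (1 - Real.exp (-2 * t))) *
      Real.exp (-(2 / (Real.exp t + 1) * D)) * Real.pi ^ (-(n : ℝ) / 2) *
      Real.exp (-3) * V, by positivity, ?_⟩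
  intro cB hcB y hy
  have h2k : (2:ℝ) ≤ 2 ^ k := by
    calc (2:ℝ) = 2 ^ 1 := (pow_one 2).symm
    _ ≤ 2 ^ k := pow_le_pow_right₀ one_le_two hk
  have hcB0 : (0:ℝ) < ‖cB‖ := by linarith
  have hrinv : ‖cB‖⁻¹ ≤ (2:ℝ)⁻¹ := by
    apply inv_anti₀ (by norm_num) (by linarith)
  have hrpos : (0:ℝ) < ‖cB‖⁻¹ := inv_pos.2 hcB0
  -- bound on ‖y - cB‖
  have hyd : ‖y - cB‖ ≤ 2 := by
    have h1 : dist y cB < 2 ^ (k + 1) * ‖cB‖⁻¹ := mem_ball.1 hy.1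
    have h2 : (2:ℝ) ^ (k + 1) * ‖cB‖⁻¹ ≤ 2 ^ (k + 1) * (2 ^ k)⁻¹ := by
      apply mul_le_mul_of_nonneg_left _ (by positivity)
      exact inv_anti₀ (by positivity) hcB
    have h3 : (2:ℝ) ^ (k + 1) * (2 ^ k)⁻¹ = 2 := by
      rw [pow_succ]
      field_simp
    rw [dist_eq_norm] at h1
    linarith
  have hycB : ‖y - cB‖ * ‖cB‖ ≤ 2 ^ (k + 1) := by
    have h1 : ‖y - cB‖ < 2 ^ (k + 1) * ‖cB‖⁻¹ := by
      have := mem_ball.1 hy.1; rwa [dist_eq_norm] at this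
    calc ‖y - cB‖ * ‖cB‖ ≤ 2 ^ (k + 1) * ‖cB‖⁻¹ * ‖cB‖ :=
      mul_le_mul_of_nonneg_right h1.le (norm_nonneg _)
    _ = 2 ^ (k + 1) := by field_simp
  -- rewrite semigroup as a set integral
  have key : ouSemigroup n t ((Metric.ball cB ‖cB‖⁻¹).indicator 1) y
      = ∫ x in Metric.ball cB ‖cB‖⁻¹, mehlerKernel n t y x ∂(gaussianMeasure n) := by
    rw [ouSemigroup, ← integral_indicator measurableSet_ball]
    congr 1
    ext x
    by_cases hx : x ∈ Metric.ball cB ‖cB‖⁻¹ <;> simp [Set.indicator_apply, hx]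
  -- finiteness of the gaussian measure of the ball
  have hγfin : gaussianMeasure n (Metric.ball cB ‖cB‖⁻¹) ≠ ∞ := by
    rw [gaussianMeasure, withDensity_apply _ measurableSet_ball]
    refine ne_of_lt (lt_of_le_of_lt (setLIntegral_mono'
        (g := fun _ => ENNReal.ofReal (Real.pi ^ (-(n:ℝ)/2))) measurableSet_ball ?_) ?_)
    · intro x _
      apply ENNReal.ofReal_le_ofReal
      have h1 : Real.exp (-‖x‖^2) ≤ 1 := Real.exp_le_one_iff.2 (neg_nonpos.2 (by positivity))
      nlinarith [hπ.le]
    · rw [setLIntegral_const]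
      exact ENNReal.mul_lt_top ENNReal.ofReal_lt_top measure_ball_lt_top
  -- volume of the ball
  have hμball : volume (Metric.ball cB ‖cB‖⁻¹) = ENNReal.ofReal (‖cB‖⁻¹ ^ n) *
      volume (Metric.ball (0 : EuclideanSpace ℝ (Fin n)) 1) := by
    rw [Measure.addHaar_ball_of_pos volume cB hrpos, finrank_euclideanSpace_fin]
  -- lower bound on the gaussian measure of the ball
  have hγlow : Real.pi ^ (-(n:ℝ)/2) * Real.exp (-3) * Real.exp (-‖cB‖^2) * (‖cB‖⁻¹ ^ n * V)
      ≤ (gaussianMeasure n (Metric.ball cB ‖cB‖⁻¹)).toReal := by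
    have h1 : ENNReal.ofReal (Real.pi ^ (-(n:ℝ)/2) * (Real.exp (-3) * Real.exp (-‖cB‖^2)))
        * volume (Metric.ball cB ‖cB‖⁻¹) ≤ gaussianMeasure n (Metric.ball cB ‖cB‖⁻¹) := by
      rw [gaussianMeasure, withDensity_apply _ measurableSet_ball, ← setLIntegral_const]
      apply setLIntegral_mono' measurableSet_ball
      intro x hx
      apply ENNReal.ofReal_le_ofReal
      have hx1 : ‖x‖ ≤ ‖cB‖ + ‖cB‖⁻¹ := by
        have h2 := mem_ball.1 hx
        rw [dist_eq_norm] at h2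
        calc ‖x‖ = ‖cB + (x - cB)‖ := by rw [add_sub_cancel]
        _ ≤ ‖cB‖ + ‖x - cB‖ := norm_add_le _ _
        _ ≤ ‖cB‖ + ‖cB‖⁻¹ := by linarith
      have hx2 : ‖x‖^2 ≤ ‖cB‖^2 + 3 := by nlinarith [norm_nonneg x, hrpos, mul_inv_cancel₀ hcB0.ne', hrinv]
      have hx3 : Real.exp (-3) * Real.exp (-‖cB‖^2) ≤ Real.exp (-‖x‖^2) := by
        rw [← Real.exp_add]
        exact Real.exp_le_exp.2 (by linarith)
      nlinarith [hπ.le, Real.exp_pos (-3), Real.exp_pos (-‖cB‖^2)]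
    have h2 := ENNReal.toReal_mono hγfin h1
    rw [ENNReal.toReal_mul, ENNReal.toReal_ofReal (by positivity), hμball,
      ENNReal.toReal_mul, ENNReal.toReal_ofReal (by positivity)] at h2
    calc Real.pi ^ (-(n:ℝ)/2) * Real.exp (-3) * Real.exp (-‖cB‖^2) * (‖cB‖⁻¹ ^ n * V)
        = Real.pi ^ (-(n:ℝ)/2) * (Real.exp (-3) * Real.exp (-‖cB‖^2)) * (‖cB‖⁻¹ ^ n * V) := by
          ring
    _ ≤ _ := h2
  -- pointwise lower bound on the kernel
  have hker : ∀ x ∈ Metric.ball cB ‖cB‖⁻¹,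
      (1 - Real.exp (-2*t)) ^ (-(n:ℝ)/2) *
        Real.exp (-(9 * Real.exp (-t)) / (1 - Real.exp (-2*t))) *
        Real.exp (2 * Real.exp (-t) * (‖cB‖^2 - D) / (1 + Real.exp (-t)))
      ≤ mehlerKernel n t y x := by
    intro x hx
    have hxd : ‖x - cB‖ ≤ ‖cB‖⁻¹ := by
      have h2 := mem_ball.1 hx; rw [dist_eq_norm] at h2; linarith
    have hxd2 : ‖x - cB‖ ≤ 2⁻¹ := le_trans hxd hrinv
    have hyx : ‖y - x‖ ≤ 3 := by
      calc ‖y - x‖ = ‖(y - cB) - (x - cB)‖ := by abel_nf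
      _ ≤ ‖y - cB‖ + ‖x - cB‖ := norm_sub_le _ _
      _ ≤ 3 := by linarith
    have hip : ‖cB‖^2 - D ≤ ⟪y, x⟫ := by
      have e1 : ⟪y, x⟫ = ‖cB‖^2 + ⟪cB, x - cB⟫ + ⟪y - cB, cB⟫ + ⟪y - cB, x - cB⟫ := by
        have hy' : y = cB + (y - cB) := by abel
        have hx' : x = cB + (x - cB) := by abel
        conv_lhs => rw [hy', hx']
        rw [inner_add_left, inner_add_right, inner_add_right, real_inner_self_eq_norm_sq]
        ring
      have b1 : -(1:ℝ) ≤ ⟪cB, x - cB⟫ := by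
        have h2 := abs_real_inner_le_norm cB (x - cB)
        have h3 : ‖cB‖ * ‖x - cB‖ ≤ 1 := by
          calc ‖cB‖ * ‖x - cB‖ ≤ ‖cB‖ * ‖cB‖⁻¹ :=
            mul_le_mul_of_nonneg_left hxd (norm_nonneg _)
          _ = 1 := mul_inv_cancel₀ hcB0.ne'
        have h4 := neg_abs_le (⟪cB, x - cB⟫ : ℝ)
        linarith
      have b2 : -(2:ℝ)^(k+1) ≤ ⟪y - cB, cB⟫ := by
        have h2 := abs_real_inner_le_norm (y - cB) cB
        have h4 := neg_abs_le (⟪y - cB, cB⟫ : ℝ)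
        linarith
      have b3 : -(1:ℝ) ≤ ⟪y - cB, x - cB⟫ := by
        have h2 := abs_real_inner_le_norm (y - cB) (x - cB)
        have h3 : ‖y - cB‖ * ‖x - cB‖ ≤ 1 := by
          calc ‖y - cB‖ * ‖x - cB‖ ≤ 2 * 2⁻¹ :=
            mul_le_mul hyd hxd2 (norm_nonneg _) (by norm_num)
          _ = 1 := by norm_num
        have h4 := neg_abs_le (⟪y - cB, x - cB⟫ : ℝ)
        linarith
      rw [hD_def]
      linarith [e1]
    rw [mehlerKernel]
    have f1 : Real.exp (-(9 * Real.exp (-t)) / (1 - Real.exp (-2*t)))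
        ≤ Real.exp (-(Real.exp (-t)) * ‖y - x‖^2 / (1 - Real.exp (-2*t))) := by
      apply Real.exp_le_exp.2
      apply (div_le_div_iff_of_pos_right hb).2
      have h9 : ‖y - x‖^2 ≤ 9 := by nlinarith [norm_nonneg (y - x)]
      nlinarith [mul_le_mul_of_nonneg_left h9 ha.le]
    have f2 : Real.exp (2 * Real.exp (-t) * (‖cB‖^2 - D) / (1 + Real.exp (-t)))
        ≤ Real.exp (2 * Real.exp (-t) * ⟪y, x⟫ / (1 + Real.exp (-t))) := by
      apply Real.exp_le_exp.2
      apply (div_le_div_iff_of_pos_right (by linarith)).2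
      nlinarith
    calc (1 - Real.exp (-2*t)) ^ (-(n:ℝ)/2) *
        Real.exp (-(9 * Real.exp (-t)) / (1 - Real.exp (-2*t))) *
        Real.exp (2 * Real.exp (-t) * (‖cB‖^2 - D) / (1 + Real.exp (-t)))
        ≤ (1 - Real.exp (-2*t)) ^ (-(n:ℝ)/2) *
          Real.exp (-(Real.exp (-t)) * ‖y - x‖^2 / (1 - Real.exp (-2*t))) *
          Real.exp (2 * Real.exp (-t) * ⟪y, x⟫ / (1 + Real.exp (-t))) := by
          exact mul_le_mul (mul_le_mul_of_nonneg_left f1 hA.le) f2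
            (Real.exp_pos _).le (mul_nonneg hA.le (Real.exp_pos _).le)
    _ = mehlerKernel n t y x := rfl
  -- continuity and integrability of the kernel
  have hcont : Continuous fun x => mehlerKernel n t y x := by
    unfold mehlerKernel
    have h1 : Continuous fun x : EuclideanSpace ℝ (Fin n) => (⟪y, x⟫ : ℝ) :=
      continuous_const.inner continuous_id
    fun_prop
  have hint : IntegrableOn (fun x => mehlerKernel n t y x) (Metric.ball cB ‖cB‖⁻¹)
      (gaussianMeasure n) := by
    apply Measure.integrableOn_of_bounded (M := (1 - Real.exp (-2*t)) ^ (-(n:ℝ)/2) *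
      Real.exp (2 * Real.exp (-t) * (‖y‖ * (‖cB‖ + 1)) / (1 + Real.exp (-t)))) hγfin
      hcont.aestronglyMeasurable
    rw [ae_restrict_iff' measurableSet_ball]
    apply ae_of_all
    intro x hx
    have hx1 : ‖x‖ ≤ ‖cB‖ + 1 := by
      have h2 := mem_ball.1 hx
      rw [dist_eq_norm] at h2
      calc ‖x‖ = ‖cB + (x - cB)‖ := by rw [add_sub_cancel]
      _ ≤ ‖cB‖ + ‖x - cB‖ := norm_add_le _ _
      _ ≤ ‖cB‖ + 1 := by
        have : ‖cB‖⁻¹ ≤ 1 := by linarith [hrinv]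
        linarith
    rw [mehlerKernel, Real.norm_eq_abs, abs_of_nonneg (mul_nonneg (mul_nonneg hA.le
      (Real.exp_pos _).le) (Real.exp_pos _).le)]
    have e1 : Real.exp (-(Real.exp (-t)) * ‖y - x‖^2 / (1 - Real.exp (-2*t))) ≤ 1 := by
      apply Real.exp_le_one_iff.2
      apply div_nonpos_of_nonpos_of_nonneg _ hb.le
      nlinarith [sq_nonneg ‖y - x‖]
    have e2 : Real.exp (2 * Real.exp (-t) * ⟪y, x⟫ / (1 + Real.exp (-t)))
        ≤ Real.exp (2 * Real.exp (-t) * (‖y‖ * (‖cB‖ + 1)) / (1 + Real.exp (-t))) := by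
      apply Real.exp_le_exp.2
      apply (div_le_div_iff_of_pos_right (by linarith)).2
      have h3 : (⟪y, x⟫ : ℝ) ≤ ‖y‖ * (‖cB‖ + 1) := by
        calc (⟪y, x⟫ : ℝ) ≤ ‖y‖ * ‖x‖ := real_inner_le_norm y x
        _ ≤ ‖y‖ * (‖cB‖ + 1) := mul_le_mul_of_nonneg_left hx1 (norm_nonneg _)
      nlinarith
    calc (1 - Real.exp (-2*t)) ^ (-(n:ℝ)/2) *
        Real.exp (-(Real.exp (-t)) * ‖y - x‖^2 / (1 - Real.exp (-2*t))) *
        Real.exp (2 * Real.exp (-t) * ⟪y, x⟫ / (1 + Real.exp (-t)))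
        ≤ (1 - Real.exp (-2*t)) ^ (-(n:ℝ)/2) * 1 *
          Real.exp (2 * Real.exp (-t) * (‖y‖ * (‖cB‖ + 1)) / (1 + Real.exp (-t))) :=
          mul_le_mul (mul_le_mul_of_nonneg_left e1 hA.le) e2 (Real.exp_pos _).le
            (mul_nonneg hA.le (by norm_num))
    _ = _ := by ring
  -- assembling
  rw [ge_iff_le, key]
  have hmain := setIntegral_ge_of_const_le_real measurableSet_ball hγfin hker hint
  refine le_trans ?_ hmain
  have hmnn : (0:ℝ) ≤ (1 - Real.exp (-2*t)) ^ (-(n:ℝ)/2) *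
      Real.exp (-(9 * Real.exp (-t)) / (1 - Real.exp (-2*t))) *
      Real.exp (2 * Real.exp (-t) * (‖cB‖^2 - D) / (1 + Real.exp (-t))) :=
    mul_nonneg (mul_nonneg hA.le (Real.exp_pos _).le) (Real.exp_pos _).le
  refine le_trans (le_of_eq ?_) (mul_le_mul_of_nonneg_left hγlow hmnn)
  rw [hβeq]
  have hrn : ‖cB‖ ^ (-(n:ℝ)) = ‖cB‖⁻¹ ^ n := by
    rw [Real.rpow_neg (norm_nonneg _), Real.rpow_natCast, inv_pow]
  rw [hrn]
  have hE : Real.exp (-(2 * Real.exp (-t) / (1 + Real.exp (-t)) * D)) *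
      Real.exp (‖cB‖^2 * (2 * Real.exp (-t) / (1 + Real.exp (-t)) - 1))
      = Real.exp (2 * Real.exp (-t) * (‖cB‖^2 - D) / (1 + Real.exp (-t))) *
        Real.exp (-‖cB‖^2) := by
    rw [← Real.exp_add, ← Real.exp_add]
    congr 1
    field_simp
    ring
  linear_combination ((1 - Real.exp (-2*t)) ^ (-(n:ℝ)/2) *
    Real.exp (-(9 * Real.exp (-t)) / (1 - Real.exp (-2*t))) * Real.pi ^ (-(n:ℝ)/2) *
    Real.exp (-3) * V * ‖cB‖⁻¹ ^ n) * hE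
end

section
/- Let k ≥ 1 be a natural number and let B = B(c_B, r_B) be a ball in ℝⁿ with r_B = |c_B|^{−1} and |c_B| ≥ 2^k. Then for all x ∈ B and all y ∈ C_k(B), one has ⟨x, y⟩ ≥ |c_B|² − (n + 1)·2^{k+2}. -/
open MeasureTheory Real Set Metric
open scoped ENNReal RealInnerProductSpace

/-- Inner product lower bound: if $B = B(c_B, |c_B|^{-1})$ with $|c_B| ≥ 2^k$, then for
$x ∈ B$ and $y ∈ C_k(B)$ one has $⟨x,y⟩ ≥ |c_B|^2 - (n+1) 2^{k+2}$. -/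
theorem inner_product_lower_bound (n : ℕ) (hn : 1 ≤ n) (k : ℕ) (hk : 1 ≤ k)
    (cB : EuclideanSpace ℝ (Fin n)) (hcB : (2 : ℝ) ^ k ≤ ‖cB‖) :
    ∀ x ∈ Metric.ball cB ‖cB‖⁻¹, ∀ y ∈ annulus n cB ‖cB‖⁻¹ k,
      ⟪x, y⟫ ≥ ‖cB‖ ^ 2 - ((n : ℝ) + 1) * 2 ^ (k + 2) := by
  intro x hx y hy
  have hM2 : (2:ℝ) ≤ ‖cB‖ := le_trans (by
    calc (2:ℝ) = 2 ^ 1 := (pow_one 2).symm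
    _ ≤ 2 ^ k := by exact pow_le_pow_right₀ (by norm_num) hk) hcB
  have hM0 : (0:ℝ) < ‖cB‖ := by linarith
  have ha : ‖x - cB‖ < ‖cB‖⁻¹ := by
    rw [← dist_eq_norm]; exact mem_ball.mp hx
  have hb : ‖y - cB‖ < 2 ^ (k + 1) * ‖cB‖⁻¹ := by
    rw [← dist_eq_norm]; exact mem_ball.mp hy.1
  have key : ⟪x, y⟫ = ‖cB‖ ^ 2 + ⟪cB, y - cB⟫ + ⟪x - cB, cB⟫ + ⟪x - cB, y - cB⟫ := by
    have h1 : ⟪x, y⟫ = ⟪cB + (x - cB), cB + (y - cB)⟫ := by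
      congr 1 <;> abel
    rw [h1, inner_add_left, inner_add_right, inner_add_right,
      real_inner_self_eq_norm_sq]
    ring
  have c1 : |⟪cB, y - cB⟫| ≤ ‖cB‖ * ‖y - cB‖ := abs_real_inner_le_norm _ _
  have c2 : |⟪x - cB, cB⟫| ≤ ‖x - cB‖ * ‖cB‖ := abs_real_inner_le_norm _ _
  have c3 : |⟪x - cB, y - cB⟫| ≤ ‖x - cB‖ * ‖y - cB‖ := abs_real_inner_le_norm _ _
  have hinv : ‖cB‖⁻¹ ≤ 1 / 2 := by
    rw [inv_le_iff_one_le_mul₀ hM0] ; nlinarith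
  have hinvpos : (0:ℝ) < ‖cB‖⁻¹ := inv_pos.mpr hM0
  have hmul : ‖cB‖ * ‖cB‖⁻¹ = 1 := mul_inv_cancel₀ (ne_of_gt hM0)
  have hpk : (2:ℝ) ≤ 2 ^ k := by
    calc (2:ℝ) = 2 ^ 1 := (pow_one 2).symm
    _ ≤ 2 ^ k := by exact pow_le_pow_right₀ (by norm_num) hk
  have hn1 : (1:ℝ) ≤ (n:ℝ) := by exact_mod_cast hn
  have e1 : |⟪cB, y - cB⟫| ≤ 2 ^ (k + 1) := by
    calc |⟪cB, y - cB⟫| ≤ ‖cB‖ * ‖y - cB‖ := c1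
    _ ≤ ‖cB‖ * (2 ^ (k + 1) * ‖cB‖⁻¹) := by
        exact mul_le_mul_of_nonneg_left hb.le hM0.le
    _ = 2 ^ (k + 1) := by rw [mul_comm ((2:ℝ) ^ (k+1)) _, ← mul_assoc, hmul]; ring
  have e2 : |⟪x - cB, cB⟫| ≤ 1 := by
    calc |⟪x - cB, cB⟫| ≤ ‖x - cB‖ * ‖cB‖ := c2
    _ ≤ ‖cB‖⁻¹ * ‖cB‖ := by exact mul_le_mul_of_nonneg_right ha.le hM0.le
    _ = 1 := by rw [mul_comm]; exact hmul
  have e3 : |⟪x - cB, y - cB⟫| ≤ 2 ^ (k + 1) * (1 / 4) := by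
    have hna : ‖x - cB‖ ≤ 1 / 2 := le_trans ha.le hinv
    have hnb : ‖y - cB‖ ≤ 2 ^ (k + 1) * (1 / 2) := by
      refine le_trans hb.le ?_
      exact mul_le_mul_of_nonneg_left hinv (by positivity)
    calc |⟪x - cB, y - cB⟫| ≤ ‖x - cB‖ * ‖y - cB‖ := c3
    _ ≤ (1 / 2) * (2 ^ (k + 1) * (1 / 2)) := by
        exact mul_le_mul hna hnb (norm_nonneg _) (by norm_num)
    _ = 2 ^ (k + 1) * (1 / 4) := by ring
  have hpk2 : (0:ℝ) < 2 ^ (k + 1) := by positivity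
  have habs1 := abs_le.mp e1
  have habs2 := abs_le.mp e2
  have habs3 := abs_le.mp e3
  rw [key, pow_succ ((2:ℝ)) (k+1)]
  have hpk1 : (4:ℝ) ≤ 2 ^ (k + 1) := by
    calc (4:ℝ) = 2 * 2 := by norm_num
    _ ≤ 2 ^ k * 2 := by nlinarith
    _ = 2 ^ (k + 1) := (pow_succ 2 k).symm
  have hfinal : 2 * (2 ^ (k + 1) * 2) ≤ ((n:ℝ) + 1) * (2 ^ (k + 1) * 2) :=
    mul_le_mul_of_nonneg_right (by linarith) (by positivity)
  linarith [habs1.1, habs2.1, habs3.1]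
end

section
/- Let k ≥ 1 be a natural number and t > 0. There is a constant c₀ = c₀(k, n, t) > 0 such that for every ball B = B(c_B, |c_B|^{−1}) with |c_B| ≥ 2^k, every x ∈ B, and every y ∈ C_k(B), the Mehler kernel satisfies M_t(x, y) ≥ c₀ · exp( 2|c_B|² / (e^t + 1) ). -/
open MeasureTheory Real Set Metric
open scoped ENNReal RealInnerProductSpace

/-- Mehler kernel lower bound: for a maximal admissible ball $B = B(c_B, |c_B|^{-1})$
with $|c_B| ≥ 2^k$, for $x ∈ B$ and $y ∈ C_k(B)$,
$M_t(x,y) ≥ c_0 \exp(2|c_B|^2/(e^t+1))$. -/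
theorem mehler_lower_bound (n : ℕ) (hn : 1 ≤ n) (k : ℕ) (hk : 1 ≤ k) (t : ℝ)
    (ht : 0 < t) :
    ∃ c₀ : ℝ, 0 < c₀ ∧ ∀ cB : EuclideanSpace ℝ (Fin n), (2 : ℝ) ^ k ≤ ‖cB‖ →
      ∀ x ∈ Metric.ball cB ‖cB‖⁻¹, ∀ y ∈ annulus n cB ‖cB‖⁻¹ k,
        mehlerKernel n t x y ≥ c₀ * Real.exp (2 * ‖cB‖ ^ 2 / (Real.exp t + 1)) := by
  have hd : 0 < 1 - Real.exp (-2 * t) := by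
    have : Real.exp (-2 * t) < 1 := Real.exp_lt_one_iff.mpr (by linarith)
    linarith
  have het : 0 < Real.exp (-t) := Real.exp_pos _
  have h1e : 0 < 1 + Real.exp (-t) := by linarith
  refine ⟨(1 - Real.exp (-2 * t)) ^ (-(n : ℝ) / 2) *
      Real.exp (-(Real.exp (-t)) * 9 / (1 - Real.exp (-2 * t))) *
      Real.exp (-(2 * Real.exp (-t) / (1 + Real.exp (-t))) * (2 ^ (k + 1) + 3)),
    by positivity, ?_⟩
  intro cB hcB x hx y hy
  have hP2 : (2 : ℝ) ≤ 2 ^ k := by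
    calc (2 : ℝ) = 2 ^ 1 := (pow_one 2).symm
    _ ≤ 2 ^ k := pow_le_pow_right₀ (by norm_num) hk
  have hcpos : (0 : ℝ) < ‖cB‖ := lt_of_lt_of_le (by linarith) hcB
  have hsP : ‖cB‖⁻¹ * (2 : ℝ) ^ k ≤ 1 := by
    rw [← mul_inv_cancel₀ hcpos.ne', mul_comm ‖cB‖⁻¹]
    exact mul_le_mul_of_nonneg_right hcB (by positivity)
  have hsc : ‖cB‖⁻¹ * ‖cB‖ = 1 := inv_mul_cancel₀ hcpos.ne'
  have hs2 : ‖cB‖⁻¹ ≤ 1 / 2 := by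
    rw [div_eq_inv_mul, mul_one]
    exact inv_anti₀ (by norm_num) (le_trans hP2 hcB)
  have hx' : ‖x - cB‖ < ‖cB‖⁻¹ := by
    rw [← dist_eq_norm]; exact Metric.mem_ball.mp hx
  have hy' : ‖y - cB‖ < 2 ^ (k + 1) * ‖cB‖⁻¹ := by
    rw [← dist_eq_norm]; exact Metric.mem_ball.mp hy.1
  have hpk1 : (2 : ℝ) ^ (k + 1) = 2 * 2 ^ k := by ring
  -- products bounds
  have h1 : ‖x - cB‖ * ‖cB‖ ≤ 1 := by
    calc ‖x - cB‖ * ‖cB‖ ≤ ‖cB‖⁻¹ * ‖cB‖ :=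
          mul_le_mul_of_nonneg_right hx'.le (norm_nonneg _)
    _ = 1 := hsc
  have h2 : ‖cB‖ * ‖y - cB‖ ≤ 2 ^ (k + 1) := by
    calc ‖cB‖ * ‖y - cB‖ ≤ ‖cB‖ * (2 ^ (k + 1) * ‖cB‖⁻¹) :=
          mul_le_mul_of_nonneg_left hy'.le (norm_nonneg _)
    _ = 2 ^ (k + 1) * (‖cB‖⁻¹ * ‖cB‖) := by ring
    _ = 2 ^ (k + 1) := by rw [hsc, mul_one]
  have h3 : ‖x - cB‖ * ‖y - cB‖ ≤ 2 := by
    have hxle : ‖x - cB‖ ≤ 1 / 2 := hx'.le.trans hs2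
    have hyle : ‖y - cB‖ ≤ 2 * 1 := by
      calc ‖y - cB‖ ≤ 2 ^ (k + 1) * ‖cB‖⁻¹ := hy'.le
      _ = 2 * (‖cB‖⁻¹ * 2 ^ k) := by rw [hpk1]; ring
      _ ≤ 2 * 1 := by nlinarith
    nlinarith [norm_nonneg (x - cB), norm_nonneg (y - cB)]
  -- inner product lower bound
  have hinner : ‖cB‖ ^ 2 - (2 ^ (k + 1) + 3) ≤ ⟪x, y⟫ := by
    have expand : ⟪x, y⟫ = ⟪x - cB, y - cB⟫ + ⟪x - cB, cB⟫ +
        ⟪cB, y - cB⟫ + ⟪cB, cB⟫ := by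
      simp only [inner_sub_left, inner_sub_right]; ring
    have b1 : -(‖x - cB‖ * ‖y - cB‖) ≤ ⟪x - cB, y - cB⟫ :=
      neg_le_of_abs_le (abs_real_inner_le_norm _ _)
    have b2 : -(‖x - cB‖ * ‖cB‖) ≤ ⟪x - cB, cB⟫ :=
      neg_le_of_abs_le (abs_real_inner_le_norm _ _)
    have b3 : -(‖cB‖ * ‖y - cB‖) ≤ ⟪cB, y - cB⟫ :=
      neg_le_of_abs_le (abs_real_inner_le_norm _ _)
    have b4 : ⟪cB, cB⟫ = ‖cB‖ ^ 2 := real_inner_self_eq_norm_sq cB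
    linarith
  -- norm bound
  have hnorm : ‖x - y‖ ^ 2 ≤ 9 := by
    have hsplit : ‖x - y‖ ≤ ‖x - cB‖ + ‖y - cB‖ := by
      have : x - y = (x - cB) - (y - cB) := by abel
      rw [this]; exact norm_sub_le _ _
    have hxle : ‖x - cB‖ ≤ 1 / 2 := hx'.le.trans hs2
    have hyle : ‖y - cB‖ ≤ 2 := by
      calc ‖y - cB‖ ≤ 2 ^ (k + 1) * ‖cB‖⁻¹ := hy'.le
      _ = 2 * (‖cB‖⁻¹ * 2 ^ k) := by rw [hpk1]; ring
      _ ≤ 2 * 1 := by nlinarith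
      _ = 2 := by norm_num
    have h9 : ‖x - y‖ ≤ 3 := by linarith
    nlinarith [norm_nonneg (x - y)]
  -- exponent inequalities
  have e1 : -(Real.exp (-t)) * 9 / (1 - Real.exp (-2 * t)) ≤
      -(Real.exp (-t)) * ‖x - y‖ ^ 2 / (1 - Real.exp (-2 * t)) := by
    apply (div_le_div_iff_of_pos_right hd).mpr
    nlinarith
  have e2 : 2 * Real.exp (-t) / (1 + Real.exp (-t)) * (‖cB‖ ^ 2 - (2 ^ (k + 1) + 3)) ≤
      2 * Real.exp (-t) * ⟪x, y⟫ / (1 + Real.exp (-t)) := by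
    rw [div_mul_eq_mul_div]
    apply (div_le_div_iff_of_pos_right h1e).mpr
    nlinarith
  have hbz : 2 * ‖cB‖ ^ 2 / (Real.exp t + 1) =
      2 * Real.exp (-t) / (1 + Real.exp (-t)) * ‖cB‖ ^ 2 := by
    rw [Real.exp_neg]
    have h := Real.exp_pos t
    field_simp
  have hApos : 0 < (1 - Real.exp (-2 * t)) ^ (-(n : ℝ) / 2) :=
    Real.rpow_pos_of_pos hd _
  rw [ge_iff_le]
  calc (1 - Real.exp (-2 * t)) ^ (-(n : ℝ) / 2) *
        Real.exp (-(Real.exp (-t)) * 9 / (1 - Real.exp (-2 * t))) *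
        Real.exp (-(2 * Real.exp (-t) / (1 + Real.exp (-t))) * (2 ^ (k + 1) + 3)) *
        Real.exp (2 * ‖cB‖ ^ 2 / (Real.exp t + 1))
      = (1 - Real.exp (-2 * t)) ^ (-(n : ℝ) / 2) *
        Real.exp (-(Real.exp (-t)) * 9 / (1 - Real.exp (-2 * t))) *
        Real.exp (2 * Real.exp (-t) / (1 + Real.exp (-t)) * (‖cB‖ ^ 2 - (2 ^ (k + 1) + 3))) := by
        rw [mul_assoc, ← Real.exp_add, hbz]
        congr 2
        ring
    _ ≤ (1 - Real.exp (-2 * t)) ^ (-(n : ℝ) / 2) *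
        Real.exp (-(Real.exp (-t)) * ‖x - y‖ ^ 2 / (1 - Real.exp (-2 * t))) *
        Real.exp (2 * Real.exp (-t) * ⟪x, y⟫ / (1 + Real.exp (-t))) := by
        apply mul_le_mul _ (Real.exp_le_exp.mpr e2) (Real.exp_pos _).le (by positivity)
        exact mul_le_mul_of_nonneg_left (Real.exp_le_exp.mpr e1) hApos.le
    _ = mehlerKernel n t x y := rfl
end

section
/- Let k ≥ 1 be a natural number. There is a constant c₀ = c₀(k, n) > 0 such that for every ball B = B(c_B, |c_B|^{−1}) with |c_B| ≥ 2^k, the Gaussian measure of the annulus satisfies γ(C_k(B)) ≥ c₀ · |c_B|^{−n} · e^{−|c_B|²}. -/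
open MeasureTheory Real Set Metric
open scoped ENNReal RealInnerProductSpace

set_option maxHeartbeats 1000000 in
/-- Lower bound for the Gaussian measure of the annulus $C_k(B)$ of a maximal
admissible ball: $γ(C_k(B)) ≥ c_0 |c_B|^{-n} e^{-|c_B|^2}$. -/
theorem gaussian_annulus_lower_bound (n : ℕ) (hn : 1 ≤ n) (k : ℕ) (hk : 1 ≤ k) :
    ∃ c₀ : ℝ, 0 < c₀ ∧ ∀ cB : EuclideanSpace ℝ (Fin n), (2 : ℝ) ^ k ≤ ‖cB‖ →
      ENNReal.ofReal (c₀ * ‖cB‖ ^ (-(n : ℝ)) * Real.exp (-‖cB‖ ^ 2)) ≤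
        gaussianMeasure n (annulus n cB ‖cB‖⁻¹ k) := by
  haveI : Nontrivial (EuclideanSpace ℝ (Fin n)) :=
    Module.nontrivial_of_finrank_pos (R := ℝ)
      (by rw [finrank_euclideanSpace_fin]; exact hn)
  set v : ℝ := (volume (Metric.ball (0 : EuclideanSpace ℝ (Fin n)) 1)).toReal with hv_def
  have hvE : volume (Metric.ball (0 : EuclideanSpace ℝ (Fin n)) 1) ≠ ⊤ :=
    measure_ball_lt_top.ne
  have hvpos : 0 < v := ENNReal.toReal_pos (measure_ball_pos volume 0 one_pos).ne' hvE
  have hπ : (0:ℝ) < Real.pi ^ (-(n:ℝ)/2) := Real.rpow_pos_of_pos Real.pi_pos _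
  refine ⟨Real.pi ^ (-(n:ℝ)/2) * v * (2:ℝ)^(k*n) / 4^n, by positivity, fun cB hcB => ?_⟩
  have h2k : (0:ℝ) < 2^k := by positivity
  have h2k2 : (2:ℝ) ≤ 2^k := by
    calc (2:ℝ) = 2^1 := (pow_one 2).symm
    _ ≤ 2^k := pow_le_pow_right₀ one_le_two hk
  have hR : (0:ℝ) < ‖cB‖ := lt_of_lt_of_le h2k hcB
  set R := ‖cB‖ with hRdef
  set δ : ℝ := 2^k / (4*R) with hδ
  have hδpos : 0 < δ := by positivity
  set ρ : ℝ := 3*2^k/(2*R) with hρ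
  have hρpos : 0 < ρ := by positivity
  set p : EuclideanSpace ℝ (Fin n) := (1 - ρ/R) • cB with hp
  have hRsq : 2 * 2^k ≤ R^2 := by nlinarith
  have hρR : ρ / R ≤ 3/4 := by
    rw [hρ, div_div, div_le_iff₀ (by positivity)]
    nlinarith
  have hpc : dist p cB = ρ := by
    have h1 : p - cB = (-(ρ/R)) • cB := by
      rw [hp, sub_smul, one_smul, neg_smul]
      abel
    rw [dist_eq_norm, h1, norm_smul, norm_neg, Real.norm_eq_abs,
      abs_of_nonneg (by positivity : (0:ℝ) ≤ ρ/R)]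
    field_simp
    exact hRdef.symm
  have hpn : ‖p‖ = R - ρ := by
    rw [hp, norm_smul, Real.norm_eq_abs, abs_of_nonneg (by linarith : (0:ℝ) ≤ 1 - ρ/R),
      ← hRdef]
    field_simp
  have hsub : Metric.ball p δ ⊆ annulus n cB R⁻¹ k := by
    intro x hx
    rw [Metric.mem_ball] at hx
    constructor
    · rw [Metric.mem_ball]
      have := dist_triangle x p cB
      rw [hpc] at this
      have h2 : δ + ρ < 2^(k+1) * R⁻¹ := by
        have e1 : δ + ρ = 7*2^k/(4*R) := by rw [hδ, hρ]; field_simp; ring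
        have e2 : (2:ℝ)^(k+1) * R⁻¹ = 2*2^k/R := by rw [pow_succ]; field_simp
        rw [e1, e2, div_lt_div_iff₀ (by positivity) (by positivity)]
        nlinarith
      linarith
    · simp only [Metric.mem_ball, not_lt]
      have := dist_triangle p x cB
      rw [hpc, dist_comm p x] at this
      have h2 : 2^k * R⁻¹ ≤ ρ - δ := by
        have e1 : ρ - δ = 5*2^k/(4*R) := by rw [hδ, hρ]; field_simp; ring
        have e2 : (2:ℝ)^k * R⁻¹ = 2^k/R := by field_simp
        rw [e1, e2, div_le_div_iff₀ (by positivity) (by positivity)]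
        nlinarith
      linarith
  have hnormx : ∀ x ∈ Metric.ball p δ, ‖x‖ ≤ R := by
    intro x hx
    rw [Metric.mem_ball, dist_eq_norm] at hx
    have h1 : ‖x‖ ≤ ‖p‖ + ‖x - p‖ := by
      calc ‖x‖ = ‖p + (x - p)‖ := by rw [add_sub_cancel]
      _ ≤ ‖p‖ + ‖x - p‖ := norm_add_le _ _
    have h2 : δ ≤ ρ := by
      rw [hδ, hρ]
      rw [div_le_div_iff₀ (by positivity) (by positivity)]
      nlinarith
    rw [hpn] at h1
    linarith
  have hmeas : MeasurableSet (Metric.ball p δ) := measurableSet_ball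
  have key : ENNReal.ofReal (Real.pi ^ (-(n:ℝ)/2) * Real.exp (-R^2)) * volume (Metric.ball p δ)
      ≤ gaussianMeasure n (Metric.ball p δ) := by
    rw [gaussianMeasure, withDensity_apply _ hmeas]
    calc ENNReal.ofReal (Real.pi ^ (-(n:ℝ)/2) * Real.exp (-R^2)) * volume (Metric.ball p δ)
        = ∫⁻ _ in Metric.ball p δ,
            ENNReal.ofReal (Real.pi ^ (-(n:ℝ)/2) * Real.exp (-R^2)) ∂volume :=
          (setLIntegral_const _ _).symm
      _ ≤ ∫⁻ x in Metric.ball p δ,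
            ENNReal.ofReal (Real.pi ^ (-(n:ℝ)/2) * Real.exp (-‖x‖^2)) ∂volume := by
          refine setLIntegral_mono' hmeas fun x hx => ?_
          refine ENNReal.ofReal_le_ofReal (mul_le_mul_of_nonneg_left ?_ hπ.le)
          have hxR := hnormx x hx
          have hx0 := norm_nonneg x
          exact Real.exp_le_exp.2 (by nlinarith)
  have hvol : volume (Metric.ball p δ) = ENNReal.ofReal (δ^n) * ENNReal.ofReal v := by
    rw [Measure.addHaar_ball volume p hδpos.le, finrank_euclideanSpace_fin,
      hv_def, ENNReal.ofReal_toReal hvE]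
  have hmono := measure_mono (μ := gaussianMeasure n) hsub
  refine le_trans ?_ (le_trans key hmono)
  rw [hvol, ← ENNReal.ofReal_mul (by positivity), ← ENNReal.ofReal_mul (by positivity)]
  refine ENNReal.ofReal_le_ofReal (le_of_eq ?_)
  have hrn : R ^ (-(n:ℝ)) = (R^n)⁻¹ := by
    rw [Real.rpow_neg hR.le, Real.rpow_natCast]
  rw [hrn, hδ, div_pow, pow_mul]
  rw [mul_pow]
  field_simp
end
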